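/- Let ξ̄ > 0 and let g : ℝ → ℝ be nondecreasing and Lipschitz continuous. Let U, V : [0,∞) × [0,ξ̄] → ℝ be continuous functions satisfying, for all t ≥ 0 and ξ ∈ [0,ξ̄], U(t,ξ) = U(0,ξ) + (1/2)∫₀^t ∫₀^ξ g(U(s,η)) dη ds and V(t,ξ) = V(0,ξ) + (1/2)∫₀^t ∫₀^ξ g(V(s,η)) dη ds. If U(0,ξ) ≤ V(0,ξ) for all ξ ∈ [0,ξ̄], then U(t,ξ) ≤ V(t,ξ) for all t ≥ 0 and all ξ ∈ [0,ξ̄]. -/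

import Mathlib

/-!
Put `w = U - V`. Since `g` is nondecreasing and `K`-Lipschitz, `g (U) - g (V) ≤ K w⁺`, so any
bound `w ≤ b(s)` on `[0, t] × [0, ξ̄]` with `b ≥ 0` improves to `w(t, ·) ≤ (K ξ̄ / 2) ∫₀ᵗ b`.
Starting from a constant bound `C` and iterating gives `w(t, ·) ≤ C (K ξ̄ t / 2)ⁿ / n!` for every
`n`, which tends to `0`.
-/

open MeasureTheory Set

open scoped NNReal Nat

theorem ContinuousOn.exists_continuous_eqOn {X : Type*} [TopologicalSpace X] [NormalSpace X]
    {s : Set X} {f : X → ℝ} (hs : IsClosed s) (hf : ContinuousOn f s) :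
    ∃ F : X → ℝ, Continuous F ∧ EqOn F f s :=
  let ⟨F, hF⟩ := ContinuousMap.exists_restrict_eq hs ⟨s.domRestrict f, hf.domRestrict⟩
  ⟨F, F.continuous, fun x hx => congr($hF ⟨x, hx⟩)⟩

theorem Monotone.sub_le_mul_of_lipschitzWith {g : ℝ → ℝ} {K : ℝ≥0} (hg : Monotone g)
    (hgK : LipschitzWith K g) {x y b : ℝ} (hb : 0 ≤ b) (hxy : x - y ≤ b) :
    g x - g y ≤ K * b := by
  rcases le_total x y with hle | hge
  · have : 0 ≤ (K : ℝ) * b := by positivity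
    linarith [hg hle]
  · calc g x - g y ≤ |g x - g y| := le_abs_self _
      _ ≤ K * |x - y| := by simpa only [Real.dist_eq] using hgK.dist_le_mul x y
      _ ≤ K * b := by rw [abs_of_nonneg (sub_nonneg.2 hge)]; gcongr

theorem mul_integral_pow_div_factorial (c t : ℝ) (n : ℕ) :
    c * ∫ s in (0 : ℝ)..t, (c * s) ^ n / n ! = (c * t) ^ (n + 1) / (n + 1)! := by
  simp_rw [mul_pow, div_eq_mul_inv, mul_assoc, intervalIntegral.integral_const_mul,
    intervalIntegral.integral_mul_const, integral_pow]
  push_cast [Nat.factorial_succ]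
  field_simp
  ring

theorem nonpos_of_le_mul_integral {α : Type*} {S : Set α} {w : ℝ → α → ℝ} {T c C : ℝ}
    (hc : 0 ≤ c) (hC : ∀ t ∈ Icc 0 T, ∀ x ∈ S, w t x ≤ C)
    (hw : ∀ t ∈ Icc 0 T, ∀ b : ℝ → ℝ, Continuous b → (∀ s ∈ Icc 0 t, 0 ≤ b s) →
      (∀ s ∈ Icc 0 t, ∀ x ∈ S, w s x ≤ b s) → ∀ x ∈ S, w t x ≤ c * ∫ s in (0 : ℝ)..t, b s) :
    ∀ t ∈ Icc 0 T, ∀ x ∈ S, w t x ≤ 0 := by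
  set C' := max C 0
  have picard (n : ℕ) : ∀ t ∈ Icc 0 T, ∀ x ∈ S, w t x ≤ C' * ((c * t) ^ n / n !) := by
    induction n with
    | zero =>
      intro t ht x hx
      simp only [pow_zero, Nat.factorial_zero, Nat.cast_one, div_one, mul_one]
      exact (hC t ht x hx).trans (le_max_left C 0)
    | succ n ih =>
      intro t ht x hx
      have hC' : 0 ≤ C' := le_max_right C 0
      calc w t x ≤ c * ∫ s in (0 : ℝ)..t, C' * ((c * s) ^ n / n !) :=
            hw t ht _ (by fun_prop) (fun s hs => by have := hs.1; positivity)
              (fun s hs => ih s ⟨hs.1, hs.2.trans ht.2⟩) x hx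
        _ = C' * ((c * t) ^ (n + 1) / (n + 1)!) := by
            rw [intervalIntegral.integral_const_mul, mul_left_comm,
              mul_integral_pow_div_factorial]
  intro t ht x hx
  have hlim := (FloorSemiring.tendsto_pow_div_factorial_atTop (c * t)).const_mul C'
  rw [mul_zero] at hlim
  exact ge_of_tendsto' hlim fun n => picard n t ht x hx

def SolvesCharIntegralEq (g : ℝ → ℝ) (L : ℝ) (U : ℝ → ℝ → ℝ) : Prop :=
  ∀ t : ℝ, 0 ≤ t → ∀ ξ ∈ Icc (0 : ℝ) L,
    U t ξ = U 0 ξ + (1 / 2) * ∫ s in (0 : ℝ)..t, ∫ η in (0 : ℝ)..ξ, g (U s η)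

namespace SolvesCharIntegralEq

variable {g : ℝ → ℝ} {L : ℝ} {U V : ℝ → ℝ → ℝ}

theorem congr (hU : SolvesCharIntegralEq g L U) {U' : ℝ → ℝ → ℝ}
    (h : ∀ t : ℝ, 0 ≤ t → ∀ ξ ∈ Icc (0 : ℝ) L, U' t ξ = U t ξ) :
    SolvesCharIntegralEq g L U' := by
  intro t ht ξ hξ
  rw [h t ht ξ hξ, h 0 le_rfl ξ hξ, hU t ht ξ hξ]
  congr 2
  refine intervalIntegral.integral_congr fun s hs => intervalIntegral.integral_congr fun η hη => ?_
  rw [uIcc_of_le ht] at hs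
  rw [uIcc_of_le hξ.1] at hη
  simp only [h s hs.1 η ⟨hη.1, hη.2.trans hξ.2⟩]

theorem sub_le_mul_integral {K : ℝ≥0} (hg : Monotone g) (hgK : LipschitzWith K g)
    (hU : SolvesCharIntegralEq g L U) (hV : SolvesCharIntegralEq g L V)
    (hUc : Continuous (Function.uncurry U)) (hVc : Continuous (Function.uncurry V))
    (hinit : ∀ ξ ∈ Icc (0 : ℝ) L, U 0 ξ ≤ V 0 ξ) {t : ℝ} (ht : 0 ≤ t) {b : ℝ → ℝ}
    (hb : Continuous b) (hb₀ : ∀ s ∈ Icc 0 t, 0 ≤ b s)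
    (hUV : ∀ s ∈ Icc 0 t, ∀ η ∈ Icc (0 : ℝ) L, U s η - V s η ≤ b s) :
    ∀ ξ ∈ Icc (0 : ℝ) L, U t ξ - V t ξ ≤ K * L / 2 * ∫ s in (0 : ℝ)..t, b s := by
  intro ξ hξ
  have hgU : Continuous (Function.uncurry fun s η => g (U s η)) := hgK.continuous.comp hUc
  have hgV : Continuous (Function.uncurry fun s η => g (V s η)) := hgK.continuous.comp hVc
  have hgUs (s : ℝ) : Continuous fun η => g (U s η) := hgU.comp (.prodMk_right s)
  have hgVs (s : ℝ) : Continuous fun η => g (V s η) := hgV.comp (.prodMk_right s)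
  have hIU := intervalIntegral.continuous_parametric_intervalIntegral_of_continuous'
    (μ := volume) hgU 0 ξ
  have hIV := intervalIntegral.continuous_parametric_intervalIntegral_of_continuous'
    (μ := volume) hgV 0 ξ
  have inner : ∀ s ∈ Icc 0 t,
      (∫ η in (0 : ℝ)..ξ, g (U s η)) - ∫ η in (0 : ℝ)..ξ, g (V s η) ≤ L * (K * b s) := by
    intro s hs
    rw [← intervalIntegral.integral_sub ((hgUs s).intervalIntegrable _ _)
      ((hgVs s).intervalIntegrable _ _)]
    calc ∫ η in (0 : ℝ)..ξ, g (U s η) - g (V s η) ≤ ∫ _ in (0 : ℝ)..ξ, K * b s :=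
          intervalIntegral.integral_mono_on hξ.1
            (((hgUs s).sub (hgVs s)).intervalIntegrable _ _)
            intervalIntegrable_const fun η hη =>
              hg.sub_le_mul_of_lipschitzWith hgK (hb₀ s hs) (hUV s hs η ⟨hη.1, hη.2.trans hξ.2⟩)
      _ = ξ * (K * b s) := by rw [intervalIntegral.integral_const, smul_eq_mul, sub_zero]
      _ ≤ L * (K * b s) := by have := hb₀ s hs; gcongr; exact hξ.2
  have outer := intervalIntegral.integral_mono_on (μ := volume) ht
    ((hIU.sub hIV).intervalIntegrable _ _)
    ((by fun_prop : Continuous fun s => L * (K * b s)).intervalIntegrable _ _) inner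
  simp only [Pi.sub_apply] at outer
  rw [intervalIntegral.integral_sub (hIU.intervalIntegrable _ _) (hIV.intervalIntegrable _ _),
    intervalIntegral.integral_const_mul, intervalIntegral.integral_const_mul] at outer
  rw [hU t ht ξ hξ, hV t ht ξ hξ]
  linarith [hinit ξ hξ]

end SolvesCharIntegralEq

theorem stmt14_general (ξbar : ℝ)
    (g : ℝ → ℝ) (hgmono : Monotone g) (K : NNReal) (hgLip : LipschitzWith K g)
    (U V : ℝ → ℝ → ℝ)
    (hUcont : ContinuousOn (Function.uncurry U) (Set.Ici 0 ×ˢ Set.Icc 0 ξbar))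
    (hVcont : ContinuousOn (Function.uncurry V) (Set.Ici 0 ×ˢ Set.Icc 0 ξbar))
    (hUeq : ∀ t : ℝ, 0 ≤ t → ∀ ξ ∈ Set.Icc (0:ℝ) ξbar,
      U t ξ = U 0 ξ + (1 / 2) * ∫ s in (0:ℝ)..t, ∫ η in (0:ℝ)..ξ, g (U s η))
    (hVeq : ∀ t : ℝ, 0 ≤ t → ∀ ξ ∈ Set.Icc (0:ℝ) ξbar,
      V t ξ = V 0 ξ + (1 / 2) * ∫ s in (0:ℝ)..t, ∫ η in (0:ℝ)..ξ, g (V s η))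
    (hinit : ∀ ξ ∈ Set.Icc (0:ℝ) ξbar, U 0 ξ ≤ V 0 ξ) :
    ∀ t : ℝ, 0 ≤ t → ∀ ξ ∈ Set.Icc (0:ℝ) ξbar, U t ξ ≤ V t ξ := by
  intro t₀ ht₀ ξ₀ hξ₀
  have hD : IsClosed (Ici (0 : ℝ) ×ˢ Icc 0 ξbar) := isClosed_Ici.prod isClosed_Icc
  obtain ⟨FU, hFU, hFUU⟩ := hUcont.exists_continuous_eqOn hD
  obtain ⟨FV, hFV, hFVV⟩ := hVcont.exists_continuous_eqOn hD
  have hUU (t : ℝ) (ht : 0 ≤ t) (ξ) (hξ : ξ ∈ Icc 0 ξbar) : FU (t, ξ) = U t ξ :=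
    hFUU ⟨ht, hξ⟩
  have hVV (t : ℝ) (ht : 0 ≤ t) (ξ) (hξ : ξ ∈ Icc 0 ξbar) : FV (t, ξ) = V t ξ :=
    hFVV ⟨ht, hξ⟩
  obtain ⟨C, hC⟩ := (isCompact_Icc.prod isCompact_Icc).bddAbove_image
    (f := fun p : ℝ × ℝ => FU p - FV p) (K := Icc 0 t₀ ×ˢ Icc 0 ξbar) (hFU.sub hFV).continuousOn
  have hL : 0 ≤ ξbar := hξ₀.1.trans hξ₀.2
  have key := nonpos_of_le_mul_integral (w := fun t ξ => FU (t, ξ) - FV (t, ξ)) (by positivity)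
    (fun t ht ξ hξ => hC ⟨(t, ξ), ⟨ht, hξ⟩, rfl⟩)
    (fun t ht _ => SolvesCharIntegralEq.sub_le_mul_integral hgmono hgLip
      (SolvesCharIntegralEq.congr hUeq hUU) (SolvesCharIntegralEq.congr hVeq hVV) hFU hFV
      (fun ξ hξ => by rw [hUU 0 le_rfl ξ hξ, hVV 0 le_rfl ξ hξ]; exact hinit ξ hξ) ht.1)
    t₀ ⟨ht₀, le_rfl⟩ ξ₀ hξ₀
  rw [hUU t₀ ht₀ ξ₀ hξ₀, hVV t₀ ht₀ ξ₀ hξ₀] at key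
  linarith

/-- Comparison principle for the characteristic-variable integral equation
`U(t,ξ) = U(0,ξ) + (1/2)∫₀^t ∫₀^ξ g(U(s,η)) dη ds` with `g` nondecreasing and
Lipschitz: if `U(0,·) ≤ V(0,·)` on `[0,ξ̄]` then `U(t,·) ≤ V(t,·)` for all
`t ≥ 0`. -/
theorem stmt14 (ξbar : ℝ) (hξbar : 0 < ξbar)
    (g : ℝ → ℝ) (hgmono : Monotone g) (K : NNReal) (hgLip : LipschitzWith K g)
    (U V : ℝ → ℝ → ℝ)
    (hUcont : ContinuousOn (Function.uncurry U) (Set.Ici 0 ×ˢ Set.Icc 0 ξbar))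
    (hVcont : ContinuousOn (Function.uncurry V) (Set.Ici 0 ×ˢ Set.Icc 0 ξbar))
    (hUeq : ∀ t : ℝ, 0 ≤ t → ∀ ξ ∈ Set.Icc (0:ℝ) ξbar,
      U t ξ = U 0 ξ + (1 / 2) * ∫ s in (0:ℝ)..t, ∫ η in (0:ℝ)..ξ, g (U s η))
    (hVeq : ∀ t : ℝ, 0 ≤ t → ∀ ξ ∈ Set.Icc (0:ℝ) ξbar,
      V t ξ = V 0 ξ + (1 / 2) * ∫ s in (0:ℝ)..t, ∫ η in (0:ℝ)..ξ, g (V s η))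
    (hinit : ∀ ξ ∈ Set.Icc (0:ℝ) ξbar, U 0 ξ ≤ V 0 ξ) :
    ∀ t : ℝ, 0 ≤ t → ∀ ξ ∈ Set.Icc (0:ℝ) ξbar, U t ξ ≤ V t ξ :=
  stmt14_general ξbar g hgmono K hgLip U V hUcont hVcont hUeq hVeq hinit
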